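/- arXiv:1901.02138 — 3 statements merged into one kernel-verified Lean document; each statement's English description precedes it below -/
import Mathlib

section
/- In the setting of the previous statement, if $\lambda_n$ is an eigenvalue then $y(\ell,\lambda_n) \neq 0$ and $\Phi'(\lambda_n) \neq 0$, and $\frac{y(\ell,\lambda_n)}{\alpha_n^2} = -\frac{1}{\Phi'(\lambda_n)}$. -/
open Real Set MeasureTheory Filter Topology

theorem endpoint_value_from_norming_constant
    (ℓ h H : ℝ) (hℓ : 0 < ℓ) (q : ℝ → ℝ) (hq : ContinuousOn q (Icc 0 ℓ))
    (y y' yL y'L : ℝ → ℝ → ℝ)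
    (hy : ∀ lam : ℝ, ∀ x ∈ Icc (0:ℝ) ℓ,
      HasDerivAt (fun s => y s lam) (y' x lam) x ∧
      HasDerivAt (fun s => y' s lam) ((q x - lam) * y x lam) x)
    (hy0 : ∀ lam : ℝ, y 0 lam = 1) (hy0' : ∀ lam : ℝ, y' 0 lam = h)
    (hyL : ∀ x ∈ Icc (0:ℝ) ℓ, ∀ lam : ℝ,
      HasDerivAt (fun t => y x t) (yL x lam) lam ∧
      HasDerivAt (fun t => y' x t) (y'L x lam) lam)
    (lamn : ℝ) (heig : y' ℓ lamn + H * y ℓ lamn = 0) :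
    y ℓ lamn ≠ 0 ∧ (y'L ℓ lamn + H * yL ℓ lamn) ≠ 0 ∧
    y ℓ lamn / (∫ x in (0:ℝ)..ℓ, (y x lamn)^2) =
      -(1 / (y'L ℓ lamn + H * yL ℓ lamn)) := by
  have hℓmem : ℓ ∈ Icc (0:ℝ) ℓ := ⟨hℓ.le, le_rfl⟩
  have h0mem : (0:ℝ) ∈ Icc (0:ℝ) ℓ := ⟨le_rfl, hℓ.le⟩
  have hIcc : uIcc (0:ℝ) ℓ = Icc 0 ℓ := uIcc_of_le hℓ.le
  have hIoc : uIoc (0:ℝ) ℓ = Ioc 0 ℓ := uIoc_of_le hℓ.le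
  have contY : ∀ lam, ContinuousOn (fun x => y x lam) (Icc 0 ℓ) := fun lam x hx =>
    ((hy lam x hx).1.continuousAt).continuousWithinAt
  have contY' : ∀ lam, ContinuousOn (fun x => y' x lam) (Icc 0 ℓ) := fun lam x hx =>
    ((hy lam x hx).2.continuousAt).continuousWithinAt
  -- Green's identity
  have green : ∀ lam mu : ℝ, (mu - lam) * (∫ x in (0:ℝ)..ℓ, y x lam * y x mu) =
      y' ℓ lam * y ℓ mu - y ℓ lam * y' ℓ mu := by
    intro lam mu
    have hW : ∀ x ∈ uIcc (0:ℝ) ℓ,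
        HasDerivAt (fun s => y' s lam * y s mu - y s lam * y' s mu)
          ((mu - lam) * (y x lam * y x mu)) x := by
      intro x hx
      rw [hIcc] at hx
      obtain ⟨h1, h1'⟩ := hy lam x hx
      obtain ⟨h2, h2'⟩ := hy mu x hx
      have hd := (h1'.mul h2).sub (h1.mul h2')
      exact hd.congr_deriv (by ring)
    have hint : IntervalIntegrable (fun x => (mu - lam) * (y x lam * y x mu)) volume 0 ℓ := by
      apply ContinuousOn.intervalIntegrable
      rw [hIcc]
      exact continuousOn_const.mul ((contY lam).mul (contY mu))
    have hfc := intervalIntegral.integral_eq_sub_of_hasDerivAt hW hint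
    rw [intervalIntegral.integral_const_mul] at hfc
    rw [hfc]
    simp only [hy0, hy0']
    ring
  -- bound on q
  obtain ⟨M, hM⟩ := isCompact_Icc.exists_bound_of_continuousOn hq
  have hM0 : 0 ≤ M := le_trans (norm_nonneg _) (hM 0 h0mem)
  set K : ℝ := 1 + M + |lamn| + 1 with hK
  have hKpos : 0 < K := by positivity
  set C : ℝ := (1 + h ^ 2) * Real.exp (K * ℓ) with hCdef
  have hCpos : 0 < C := by positivity
  -- Gronwall-type bound
  have hbd : ∀ lam : ℝ, |lam - lamn| ≤ 1 → ∀ x ∈ Icc (0:ℝ) ℓ, (y x lam) ^ 2 ≤ C := by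
    intro lam hlam x hx
    set f : ℝ → ℝ := fun s => (y s lam) ^ 2 + (y' s lam) ^ 2 with hf
    have hf0 : ∀ s, 0 ≤ f s := fun s => add_nonneg (sq_nonneg _) (sq_nonneg _)
    have hfc : ContinuousOn f (Icc 0 ℓ) := ((contY lam).pow 2).add ((contY' lam).pow 2)
    have hfd : ∀ s ∈ Ico (0:ℝ) ℓ, HasDerivWithinAt f
        (2 * (y s lam * y' s lam) * (1 + (q s - lam))) (Ici s) s := by
      intro s hs
      have hsc : s ∈ Icc (0:ℝ) ℓ := Ico_subset_Icc_self hs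
      obtain ⟨h1, h1'⟩ := hy lam s hsc
      have hd : HasDerivAt f
          ((2:ℕ) * (y s lam) ^ 1 * y' s lam + (2:ℕ) * (y' s lam) ^ 1 * ((q s - lam) * y s lam)) s :=
        (h1.pow 2).add (h1'.pow 2)
      have hd' := hd.hasDerivWithinAt (s := Ici s)
      exact hd'.congr_deriv (by push_cast; ring)
    have hbound : ∀ s ∈ Ico (0:ℝ) ℓ,
        ‖2 * (y s lam * y' s lam) * (1 + (q s - lam))‖ ≤ K * ‖f s‖ + 0 := by
      intro s hs
      have hsc : s ∈ Icc (0:ℝ) ℓ := Ico_subset_Icc_self hs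
      have hq1 : |q s| ≤ M := by have := hM s hsc; rwa [Real.norm_eq_abs] at this
      have hl : |lam| ≤ |lamn| + 1 := by
        have h1 := abs_sub_abs_le_abs_sub lam lamn
        linarith
      have hfactor : |1 + (q s - lam)| ≤ K := by
        have h1 : |1 + (q s - lam)| ≤ |(1:ℝ)| + |q s - lam| := abs_add_le _ _
        have h2 : |q s - lam| ≤ |q s| + |lam| := abs_sub _ _
        rw [hK]
        simp only [abs_one] at h1
        linarith
      have h2ab : |2 * (y s lam * y' s lam)| ≤ f s := by
        have hfs : f s = y s lam ^ 2 + y' s lam ^ 2 := rfl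
        rw [hfs]
        refine abs_le.mpr ⟨?_, ?_⟩
        · nlinarith [sq_nonneg (y s lam + y' s lam)]
        · nlinarith [sq_nonneg (y s lam - y' s lam)]
      calc ‖2 * (y s lam * y' s lam) * (1 + (q s - lam))‖
          = |2 * (y s lam * y' s lam)| * |1 + (q s - lam)| := by
            rw [Real.norm_eq_abs, abs_mul]
        _ ≤ f s * K := mul_le_mul h2ab hfactor (abs_nonneg _) (hf0 s)
        _ = K * ‖f s‖ + 0 := by
            rw [Real.norm_eq_abs, abs_of_nonneg (hf0 s)]; ring
    have hinit : ‖f 0‖ ≤ 1 + h ^ 2 := by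
      have : f 0 = 1 + h ^ 2 := by simp [hf, hy0, hy0']
      rw [Real.norm_eq_abs, this, abs_of_nonneg (by positivity)]
    have hgron := norm_le_gronwallBound_of_norm_deriv_right_le hfc hfd hinit hbound x hx
    rw [gronwallBound_ε0] at hgron
    calc (y x lam) ^ 2 ≤ f x := le_add_of_nonneg_right (sq_nonneg _)
      _ = ‖f x‖ := (Real.norm_of_nonneg (hf0 x)).symm
      _ ≤ (1 + h ^ 2) * Real.exp (K * (x - 0)) := hgron
      _ ≤ C := by
          rw [hCdef]
          have hKx : K * (x - 0) ≤ K * ℓ := by nlinarith [hx.2, hKpos]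
          exact mul_le_mul_of_nonneg_left (Real.exp_le_exp.mpr hKx) (by positivity)
  -- continuity of the integral in the parameter
  have hFcont : ContinuousAt (fun lam => ∫ x in (0:ℝ)..ℓ, y x lam * y x lamn) lamn := by
    apply intervalIntegral.continuousAt_of_dominated_interval (bound := fun _ => C)
    · filter_upwards with lam
      apply ContinuousOn.aestronglyMeasurable ?_ measurableSet_uIoc
      refine ((contY lam).mul (contY lamn)).mono ?_
      rw [hIoc]; exact Ioc_subset_Icc_self
    · have hev : ∀ᶠ lam in 𝓝 lamn, |lam - lamn| ≤ 1 := by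
        have hmem : Icc (lamn - 1) (lamn + 1) ∈ 𝓝 lamn :=
          Icc_mem_nhds (by linarith) (by linarith)
        filter_upwards [hmem] with lam hl
        exact abs_le.mpr ⟨by linarith [hl.1], by linarith [hl.2]⟩
      filter_upwards [hev] with lam hlam
      apply ae_of_all
      intro x hx
      rw [hIoc] at hx
      have hx' : x ∈ Icc (0:ℝ) ℓ := Ioc_subset_Icc_self hx
      have b1 := hbd lam hlam x hx'
      have b2 := hbd lamn (by simp) x hx'
      rw [Real.norm_eq_abs]
      nlinarith [sq_abs (y x lam * y x lamn), abs_nonneg (y x lam * y x lamn),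
        sq_nonneg (y x lam), sq_nonneg (y x lamn), hCpos]
    · exact intervalIntegrable_const
    · apply ae_of_all
      intro x hx
      rw [hIoc] at hx
      exact ((hyL x (Ioc_subset_Icc_self hx) lamn).1.continuousAt).mul continuousAt_const
  -- slope argument
  obtain ⟨hyL1, hyL2⟩ := hyL ℓ hℓmem lamn
  have hDer : HasDerivAt (fun t => y' ℓ t * y ℓ lamn - y ℓ t * y' ℓ lamn)
      (y'L ℓ lamn * y ℓ lamn - yL ℓ lamn * y' ℓ lamn) lamn :=
    (hyL2.mul_const _).sub (hyL1.mul_const _)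
  have hs1 := hasDerivAt_iff_tendsto_slope.mp hDer
  have hs2 : Tendsto (slope (fun t => y' ℓ t * y ℓ lamn - y ℓ t * y' ℓ lamn) lamn)
      (𝓝[≠] lamn) (𝓝 (-(∫ x in (0:ℝ)..ℓ, y x lamn * y x lamn))) := by
    have hFt : Tendsto (fun t => -(∫ x in (0:ℝ)..ℓ, y x t * y x lamn)) (𝓝[≠] lamn)
        (𝓝 (-(∫ x in (0:ℝ)..ℓ, y x lamn * y x lamn))) :=
      (hFcont.neg.tendsto).mono_left nhdsWithin_le_nhds
    apply hFt.congr'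
    filter_upwards [self_mem_nhdsWithin] with t ht
    have htne : t - lamn ≠ 0 := sub_ne_zero.mpr ht
    have hg := green t lamn
    simp only [slope_def_field]
    rw [eq_div_iff htne]
    linear_combination hg
  have hD := tendsto_nhds_unique hs1 hs2
  -- positivity of the norming constant
  have hPpos : 0 < ∫ x in (0:ℝ)..ℓ, y x lamn * y x lamn := by
    have hc0 : ContinuousAt (fun x => y x lamn) 0 := (hy lamn 0 h0mem).1.continuousAt
    have hev : ∀ᶠ x in 𝓝 (0:ℝ), 1/2 < y x lamn := by
      apply hc0.eventually
      have h1 : (fun x => y x lamn) 0 = 1 := hy0 lamn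
      rw [h1]
      exact lt_mem_nhds (by norm_num)
    obtain ⟨δ, hδpos, hδ⟩ := Metric.eventually_nhds_iff.mp hev
    set m : ℝ := min (δ/2) ℓ with hm
    have hmpos : 0 < m := lt_min (by linarith) hℓ
    have hmle : m ≤ ℓ := min_le_right _ _
    have hi1 : IntervalIntegrable (fun x => y x lamn * y x lamn) volume 0 m := by
      apply ContinuousOn.intervalIntegrable
      refine ((contY lamn).mul (contY lamn)).mono ?_
      rw [uIcc_of_le hmpos.le]
      exact Icc_subset_Icc le_rfl hmle
    have hi2 : IntervalIntegrable (fun x => y x lamn * y x lamn) volume m ℓ := by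
      apply ContinuousOn.intervalIntegrable
      refine ((contY lamn).mul (contY lamn)).mono ?_
      rw [uIcc_of_le hmle]
      exact Icc_subset_Icc hmpos.le le_rfl
    have hsplit := intervalIntegral.integral_add_adjacent_intervals hi1 hi2
    have hpos1 : 0 < ∫ x in (0:ℝ)..m, y x lamn * y x lamn := by
      apply intervalIntegral.intervalIntegral_pos_of_pos_on hi1 _ hmpos
      intro x hx
      have hxδ : dist x 0 < δ := by
        rw [Real.dist_eq, sub_zero, abs_of_pos hx.1]
        calc x < m := hx.2
          _ ≤ δ/2 := min_le_left _ _
          _ < δ := by linarith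
      have := hδ hxδ
      nlinarith
    have hpos2 : 0 ≤ ∫ x in m..ℓ, y x lamn * y x lamn :=
      intervalIntegral.integral_nonneg hmle (fun u _ => mul_self_nonneg _)
    linarith [hsplit]
  -- final assembly
  have hPP : (∫ x in (0:ℝ)..ℓ, (y x lamn)^2) = ∫ x in (0:ℝ)..ℓ, y x lamn * y x lamn := by
    simp only [pow_two]
  have key : (∫ x in (0:ℝ)..ℓ, y x lamn * y x lamn) =
      -(y ℓ lamn * (y'L ℓ lamn + H * yL ℓ lamn)) := by
    linear_combination hD + yL ℓ lamn * heig
  have hyne : y ℓ lamn ≠ 0 := by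
    intro h0
    rw [h0] at key
    simp at key
    linarith
  have hΦne : (y'L ℓ lamn + H * yL ℓ lamn) ≠ 0 := by
    intro h0
    rw [h0] at key
    simp at key
    linarith
  refine ⟨hyne, hΦne, ?_⟩
  rw [hPP, key]
  field_simp
end

section
/- With the transmutation identity above and $\psi(x) = (\epsilon - x)^2$, define $g_\epsilon(x) = \psi(x) + \int_x^\epsilon H(t,x)\psi(t)\,dt$ for $0 \le x \le \epsilon$ and $g_\epsilon(x) = 0$ for $x > \epsilon$. Then for every $\lambda > 0$, $\int_0^\epsilon g_\epsilon(x)\,y(x,\lambda)\,dx = 2\,\frac{\epsilon\sqrt{\lambda} - \sin(\epsilon\sqrt{\lambda})}{\lambda\sqrt{\lambda}} \neq 0$. -/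
/-!
Write `g = ψ + ∫_x^ε H(t, x) ψ(t) dt` with `ψ(x) = (ε - x)²`. Pairing with `y` and exchanging
the order of integration over the triangle `0 ≤ x ≤ t ≤ ε` turns `∫ g y` into
`∫ ψ(t) (y(t) + ∫_0^t H(t, x) y(x) dx) dt`, which the transmutation identity makes the cosine
transform `∫_0^ε (ε - t)² cos(t√λ) dt = 2(ε√λ - sin(ε√λ)) / λ^{3/2}`, positive since
`sin u < u` for `u > 0`.
-/

open Real Set MeasureTheory

def lowerTriangle (a b : ℝ) : Set (ℝ × ℝ) := {p | a ≤ p.2 ∧ p.2 ≤ p.1 ∧ p.1 ≤ b}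

lemma isCompact_lowerTriangle (a b : ℝ) : IsCompact (lowerTriangle a b) := by
  refine (isCompact_Icc (a := ((a, a) : ℝ × ℝ)) (b := (b, b))).of_isClosed_subset ?_ ?_
  · exact (isClosed_le continuous_const continuous_snd).inter
      ((isClosed_le continuous_snd continuous_fst).inter
        (isClosed_le continuous_fst continuous_const))
  · rintro ⟨t, x⟩ ⟨hax, hxt, htb⟩
    exact ⟨⟨hax.trans hxt, hax⟩, ⟨htb, hxt.trans htb⟩⟩

lemma integral_indicator_Icc {x b : ℝ} (hxb : x ≤ b) (g : ℝ → ℝ) :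
    ∫ t, (Icc x b).indicator g t = ∫ t in x..b, g t := by
  rw [integral_indicator measurableSet_Icc, integral_Icc_eq_integral_Ioc,
    intervalIntegral.integral_of_le hxb]

section Triangle

variable {a b : ℝ} {f : ℝ → ℝ → ℝ}

lemma integral_lowerTriangle_indicator_fst (x : ℝ) :
    ∫ t, (lowerTriangle a b).indicator (fun p => f p.1 p.2) (t, x)
      = (Icc a b).indicator (fun x => ∫ t in x..b, f t x) x := by
  by_cases hx : x ∈ Icc a b
  · rw [indicator_of_mem hx, ← integral_indicator_Icc hx.2]
    congr 1 with t
    simp only [indicator, lowerTriangle, mem_ofPred_eq, mem_Icc, hx.1, true_and]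
  · rw [indicator_of_notMem hx, ← integral_zero ℝ ℝ]
    congr 1 with t
    exact indicator_of_notMem (fun h => hx ⟨h.1, h.2.1.trans h.2.2⟩) _

lemma integral_lowerTriangle_indicator_snd (t : ℝ) :
    ∫ x, (lowerTriangle a b).indicator (fun p => f p.1 p.2) (t, x)
      = (Icc a b).indicator (fun t => ∫ x in a..t, f t x) t := by
  by_cases ht : t ∈ Icc a b
  · rw [indicator_of_mem ht, ← integral_indicator_Icc ht.1]
    congr 1 with x
    simp only [indicator, lowerTriangle, mem_ofPred_eq, mem_Icc, ht.2, and_true]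
  · rw [indicator_of_notMem ht, ← integral_zero ℝ ℝ]
    congr 1 with x
    exact indicator_of_notMem (fun h => ht ⟨h.1.trans h.2.1, h.2.2⟩) _

variable (hf : ContinuousOn (fun p : ℝ × ℝ => f p.1 p.2) (lowerTriangle a b))
include hf

lemma integrable_lowerTriangle_indicator :
    Integrable ((lowerTriangle a b).indicator fun p => f p.1 p.2) (volume.prod volume) := by
  rw [← Measure.volume_eq_prod]
  exact (integrable_indicator_iff (isCompact_lowerTriangle a b).measurableSet).2
    (hf.integrableOn_compact (isCompact_lowerTriangle a b))

lemma intervalIntegrable_integral_lowerTriangle_fst (hab : a ≤ b) :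
    IntervalIntegrable (fun x => ∫ t in x..b, f t x) volume a b := by
  have := (integrable_lowerTriangle_indicator hf).integral_prod_right
  simp only [integral_lowerTriangle_indicator_fst] at this
  exact (intervalIntegrable_iff_integrableOn_Icc_of_le hab).2
    ((integrable_indicator_iff measurableSet_Icc).1 this)

lemma intervalIntegrable_integral_lowerTriangle_snd (hab : a ≤ b) :
    IntervalIntegrable (fun t => ∫ x in a..t, f t x) volume a b := by
  have := (integrable_lowerTriangle_indicator hf).integral_prod_left
  simp only [integral_lowerTriangle_indicator_snd] at this
  exact (intervalIntegrable_iff_integrableOn_Icc_of_le hab).2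
    ((integrable_indicator_iff measurableSet_Icc).1 this)

theorem intervalIntegral_lowerTriangle_swap (hab : a ≤ b) :
    ∫ x in a..b, ∫ t in x..b, f t x = ∫ t in a..b, ∫ x in a..t, f t x := by
  simp only [← integral_indicator_Icc hab, ← integral_lowerTriangle_indicator_fst,
    ← integral_lowerTriangle_indicator_snd]
  exact (integral_integral_swap (f := fun t x => (lowerTriangle a b).indicator (fun p => f p.1 p.2) (t, x))
    (integrable_lowerTriangle_indicator hf)).symm

end Triangle

theorem integral_mul_eq_integral_mul_of_transmutation {a b : ℝ} (hab : a ≤ b)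
    {H : ℝ → ℝ → ℝ} (hH : ContinuousOn (fun p : ℝ × ℝ => H p.1 p.2) (lowerTriangle a b))
    {y ψ c g : ℝ → ℝ} (hy : ContinuousOn y (Icc a b)) (hψ : ContinuousOn ψ (Icc a b))
    (hc : ∀ x ∈ Icc a b, c x = y x + ∫ t in a..x, H x t * y t)
    (hg : ∀ x ∈ Icc a b, g x = ψ x + ∫ t in x..b, H t x * ψ t) :
    ∫ x in a..b, g x * y x = ∫ x in a..b, ψ x * c x := by
  set f : ℝ → ℝ → ℝ := fun t x => H t x * ψ t * y x
  have hf : ContinuousOn (fun p : ℝ × ℝ => f p.1 p.2) (lowerTriangle a b) :=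
    (hH.mul (hψ.comp continuousOn_fst fun p hp => ⟨hp.1.trans hp.2.1, hp.2.2⟩)).mul
      (hy.comp continuousOn_snd fun p hp => ⟨hp.1, hp.2.1.trans hp.2.2⟩)
  have hψy : IntervalIntegrable (fun x => ψ x * y x) volume a b :=
    (hψ.mul hy).intervalIntegrable_of_Icc hab
  rw [← uIcc_of_le hab] at hc hg
  calc ∫ x in a..b, g x * y x
      = ∫ x in a..b, (ψ x * y x + ∫ t in x..b, f t x) :=
        intervalIntegral.integral_congr fun x hx => by
          simp only [hg x hx, f, intervalIntegral.integral_mul_const]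
          ring
    _ = ∫ x in a..b, (ψ x * y x + ∫ t in a..x, f x t) := by
        rw [intervalIntegral.integral_add hψy
            (intervalIntegrable_integral_lowerTriangle_fst hf hab),
          intervalIntegral.integral_add hψy
            (intervalIntegrable_integral_lowerTriangle_snd hf hab),
          intervalIntegral_lowerTriangle_swap hf hab]
    _ = ∫ x in a..b, ψ x * c x :=
        intervalIntegral.integral_congr fun x hx => by
          have hfx : ∀ t, f x t = ψ x * (H x t * y t) := fun t => by ring
          simp only [hc x hx, hfx, intervalIntegral.integral_const_mul]
          ring

theorem integral_sq_sub_mul_cos (ε : ℝ) {s : ℝ} (hs : s ≠ 0) :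
    ∫ t in (0 : ℝ)..ε, (ε - t) ^ 2 * cos (t * s) = 2 * (ε * s - sin (ε * s)) / s ^ 3 := by
  have hderiv : ∀ t ∈ uIcc 0 ε, HasDerivAt
      (fun u => (ε - u) ^ 2 * sin (u * s) / s - 2 * (ε - u) * cos (u * s) / s ^ 2
        - 2 * sin (u * s) / s ^ 3)
      ((ε - t) ^ 2 * cos (t * s)) t := by
    intro t _
    have hlin : HasDerivAt (fun u : ℝ => ε - u) (-1) t := by
      simpa using (hasDerivAt_id t).const_sub ε
    have hsin : HasDerivAt (fun u => sin (u * s)) (cos (t * s) * s) t := by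
      simpa using ((hasDerivAt_id t).mul_const s).sin
    have hcos : HasDerivAt (fun u => cos (u * s)) (-sin (t * s) * s) t := by
      simpa using ((hasDerivAt_id t).mul_const s).cos
    refine (((((hlin.fun_pow 2).mul hsin).div_const s).sub
      (((hlin.const_mul 2).mul hcos).div_const (s ^ 2))).sub
      ((hsin.const_mul 2).div_const (s ^ 3))).congr_deriv ?_
    field_simp
    ring
  rw [intervalIntegral.integral_eq_sub_of_hasDerivAt hderiv
    (by apply Continuous.intervalIntegrable; fun_prop)]
  simp only [sub_self, sub_zero, zero_mul, sin_zero, cos_zero]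
  field_simp
  ring

theorem g_eps_transform_nonzero_general
    (ε : ℝ) (hε : 0 < ε) (lam : ℝ) (hlam : 0 < lam)
    (H : ℝ → ℝ → ℝ)
    (hH : ContinuousOn (fun p : ℝ × ℝ => H p.1 p.2)
      {p : ℝ × ℝ | 0 ≤ p.2 ∧ p.2 ≤ p.1 ∧ p.1 ≤ ε})
    (y : ℝ → ℝ → ℝ) (hy : Continuous fun x => y x lam)
    (htra : ∀ x ∈ Icc (0:ℝ) ε,
      Real.cos (x * Real.sqrt lam) = y x lam + ∫ t in (0:ℝ)..x, H x t * y t lam)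
    (g : ℝ → ℝ)
    (hg : ∀ x ∈ Icc (0:ℝ) ε, g x = (ε - x)^2 + ∫ t in x..ε, H t x * (ε - t)^2) :
    (∫ x in (0:ℝ)..ε, g x * y x lam) =
      2 * (ε * Real.sqrt lam - Real.sin (ε * Real.sqrt lam)) / (lam * Real.sqrt lam) ∧
    (∫ x in (0:ℝ)..ε, g x * y x lam) ≠ 0 := by
  have hs : 0 < √lam := sqrt_pos.2 hlam
  have hcube : lam * √lam = √lam ^ 3 := by rw [pow_succ, sq_sqrt hlam.le]
  have hvalue : ∫ x in (0:ℝ)..ε, g x * y x lam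
      = 2 * (ε * √lam - sin (ε * √lam)) / (lam * √lam) := by
    rw [integral_mul_eq_integral_mul_of_transmutation (ψ := fun x => (ε - x) ^ 2) hε.le hH
      hy.continuousOn (by fun_prop : Continuous fun x : ℝ => (ε - x) ^ 2).continuousOn htra hg,
      integral_sq_sub_mul_cos ε hs.ne', hcube]
  refine ⟨hvalue, hvalue ▸ (div_pos ?_ (mul_pos hlam hs)).ne'⟩
  linarith [sin_lt (mul_pos hε hs)]

theorem g_eps_transform_nonzero
    (ε : ℝ) (hε : 0 < ε) (lam : ℝ) (hlam : 0 < lam)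
    (H : ℝ → ℝ → ℝ)
    (hH : ContinuousOn (fun p : ℝ × ℝ => H p.1 p.2)
      {p : ℝ × ℝ | 0 ≤ p.2 ∧ p.2 ≤ p.1 ∧ p.1 ≤ ε})
    (y : ℝ → ℝ → ℝ) (hy : Continuous fun x => y x lam)
    (htra : ∀ x ∈ Icc (0:ℝ) ε,
      Real.cos (x * Real.sqrt lam) = y x lam + ∫ t in (0:ℝ)..x, H x t * y t lam)
    (g : ℝ → ℝ)
    (hg : ∀ x ∈ Icc (0:ℝ) ε, g x = (ε - x)^2 + ∫ t in x..ε, H t x * (ε - t)^2)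
    (hg0 : ∀ x : ℝ, ε < x → g x = 0) :
    (∫ x in (0:ℝ)..ε, g x * y x lam) =
      2 * (ε * Real.sqrt lam - Real.sin (ε * Real.sqrt lam)) / (lam * Real.sqrt lam) ∧
    (∫ x in (0:ℝ)..ε, g x * y x lam) ≠ 0 :=
  g_eps_transform_nonzero_general ε hε lam hlam H hH y hy htra g hg
end

section
/- Under the hypotheses of the previous statement, for every complex $s$ with $\Re(s) > 0$, the Laplace transform of $u$ satisfies $\int_0^\infty e^{-st} u(t)\,dt = \sum_{n\ge 0} \frac{\epsilon\sqrt{\lambda_n} - \sin(\epsilon\sqrt{\lambda_n})}{\lambda_n^2}\,\frac{2\sqrt{\lambda_n}}{(s^2 + \lambda_n)\,\alpha_n^2}$. -/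
/-!
Writing `sin θ = (e^{iθ} - e^{-iθ}) / (2i)` reduces the Laplace transform of a single mode
`sin (t ω)` to two exponential integrals, with value `ω / (s² + ω²)`. Since
`|x - sin x| ≤ 2|x|` and `√λₙ ≥ √c n`, the coefficients of `u` are `O(λₙ^{-3/2}) = O(n⁻³)`,
and `|e^{-st} sin (t ω)| ≤ e^{-t Re s}`; so the integrals of the norms of the terms are
summable and the integral commutes with the sum.
-/

open Real Filter MeasureTheory Complex

lemma exp_neg_mul_sin_eq (s : ℂ) (ω t : ℝ) :
    cexp (-s * t) * (Real.sin (t * ω) : ℂ) =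
      (cexp ((-s - I * ω) * t) - cexp ((-s + I * ω) * t)) * (I / 2) := by
  rw [show (-s - I * ω) * t = -s * t + -(t * ω : ℝ) * I by push_cast; ring,
    show (-s + I * ω) * t = -s * t + (t * ω : ℝ) * I by push_cast; ring,
    Complex.exp_add, Complex.exp_add, ofReal_sin, Complex.sin]
  ring

lemma norm_exp_neg_mul_sin_le (s : ℂ) (ω t : ℝ) :
    ‖cexp (-s * t) * (Real.sin (t * ω) : ℂ)‖ ≤ Real.exp (-s.re * t) := by
  rw [norm_mul, Complex.norm_exp, norm_real, Real.norm_eq_abs]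
  have hre : (-s * (t : ℂ)).re = -s.re * t := by simp
  rw [hre]
  exact mul_le_of_le_one_right (Real.exp_pos _).le (abs_sin_le_one _)

lemma integrableOn_exp_neg_mul_sin {s : ℂ} (hs : 0 < s.re) (ω : ℝ) :
    IntegrableOn (fun t : ℝ => cexp (-s * t) * (Real.sin (t * ω) : ℂ)) (Set.Ioi 0) := by
  have ha : (-s - I * ω).re < 0 := by simpa using hs
  have hb : (-s + I * ω).re < 0 := by simpa using hs
  simp_rw [exp_neg_mul_sin_eq]
  exact ((integrableOn_exp_mul_complex_Ioi ha 0).sub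
    (integrableOn_exp_mul_complex_Ioi hb 0)).mul_const _

lemma integral_exp_neg_mul_sin {s : ℂ} (hs : 0 < s.re) (ω : ℝ) :
    ∫ t in Set.Ioi (0 : ℝ), cexp (-s * t) * (Real.sin (t * ω) : ℂ) = ω / (s ^ 2 + ω ^ 2) := by
  have ha : (-s - I * ω).re < 0 := by simpa using hs
  have hb : (-s + I * ω).re < 0 := by simpa using hs
  simp_rw [exp_neg_mul_sin_eq]
  rw [integral_mul_const, integral_sub (integrableOn_exp_mul_complex_Ioi ha 0)
    (integrableOn_exp_mul_complex_Ioi hb 0), integral_exp_mul_complex_Ioi ha,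
    integral_exp_mul_complex_Ioi hb]
  simp only [ofReal_zero, mul_zero, Complex.exp_zero]
  have hne : ∀ {z : ℂ}, z.re < 0 → z ≠ 0 := fun h hz => by simp [hz] at h
  have hprod : (-s - I * ω) * (-s + I * ω) = s ^ 2 + ω ^ 2 := by ring_nf; rw [I_sq]; ring
  rw [← hprod]
  field_simp [hne ha, hne hb]
  ring_nf; rw [I_sq]; ring

lemma integral_exp_neg_mul_tsum_sin {s : ℂ} (hs : 0 < s.re) {a ω : ℕ → ℝ}
    (ha : Summable fun n => |a n|) :
    ∫ t in Set.Ioi (0 : ℝ), cexp (-s * t) * ((∑' n, a n * Real.sin (t * ω n) : ℝ) : ℂ) =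
      ∑' n, a n * ω n / (s ^ 2 + ω n ^ 2) := by
  set F : ℕ → ℝ → ℂ := fun n t => a n * (cexp (-s * t) * (Real.sin (t * ω n) : ℂ))
  have hF : ∀ n, IntegrableOn (F n) (Set.Ioi 0) := fun n =>
    (integrableOn_exp_neg_mul_sin hs (ω n)).const_mul _
  have hFnorm : ∀ n, ∫ t in Set.Ioi (0 : ℝ), ‖F n t‖ ≤
      |a n| * ∫ t in Set.Ioi (0 : ℝ), Real.exp (-s.re * t) := by
    intro n
    rw [← integral_const_mul]
    refine integral_mono (hF n).norm ((exp_neg_integrableOn_Ioi 0 hs).const_mul _) fun t => ?_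
    rw [norm_mul, norm_real, Real.norm_eq_abs]
    gcongr
    exact norm_exp_neg_mul_sin_le s (ω n) t
  have hsum : Summable fun n => ∫ t in Set.Ioi (0 : ℝ), ‖F n t‖ :=
    .of_nonneg_of_le (fun n => integral_nonneg fun t => norm_nonneg _) hFnorm (ha.mul_right _)
  calc _ = ∫ t in Set.Ioi (0 : ℝ), ∑' n, F n t := by
        refine setIntegral_congr_fun measurableSet_Ioi fun t _ => ?_
        rw [ofReal_tsum, ← tsum_mul_left]
        exact tsum_congr fun n => by simp only [F, ofReal_mul]; ring
    _ = ∑' n, ∫ t in Set.Ioi (0 : ℝ), F n t :=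
        (integral_tsum_of_summable_integral_norm hF hsum).symm
    _ = _ := by
        simp_rw [F, integral_const_mul, integral_exp_neg_mul_sin hs, mul_div_assoc]

lemma summable_one_div_pow_of_mul_le {c : ℝ} {f : ℕ → ℝ} (hc : 0 < c)
    (hf : ∀ n : ℕ, 1 ≤ n → c * n ≤ f n) {p : ℕ} (hp : 1 < p) :
    Summable fun n => 1 / f n ^ p := by
  refine .of_norm_bounded_eventually_nat
    ((summable_one_div_nat_pow.mpr hp).mul_left (1 / c ^ p)) ?_
  filter_upwards [eventually_ge_atTop 1] with n hn
  have hcn : 0 < c * n := mul_pos hc (by exact_mod_cast hn)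
  have hfn : 0 < f n := hcn.trans_le (hf n hn)
  calc ‖1 / f n ^ p‖ = 1 / f n ^ p := by rw [norm_of_nonneg (by positivity)]
    _ ≤ 1 / (c * n) ^ p := one_div_le_one_div_of_le (by positivity) (by gcongr; exact hf n hn)
    _ = 1 / c ^ p * (1 / n ^ p) := by rw [mul_pow, one_div_mul_one_div]

lemma abs_two_mul_sub_sin_div_le {ε σ α δ : ℝ} (hσ : 0 < σ) (hδ : 0 < δ) (hα : δ ≤ α) :
    |2 * (ε * σ - Real.sin (ε * σ)) / (σ ^ 2) ^ 2 / α| ≤ 4 * |ε| / δ * (1 / σ ^ 3) := by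
  rw [abs_div, abs_div, abs_mul, abs_two, abs_of_pos (by positivity : 0 < (σ ^ 2) ^ 2),
    abs_of_pos (hδ.trans_le hα)]
  have hx : |ε * σ - Real.sin (ε * σ)| ≤ 2 * (|ε| * σ) := by
    calc |ε * σ - Real.sin (ε * σ)| ≤ |ε * σ| + |Real.sin (ε * σ)| := abs_sub _ _
      _ ≤ 2 * |ε * σ| := by linarith [abs_sin_le_abs (x := ε * σ)]
      _ = 2 * (|ε| * σ) := by rw [abs_mul, abs_of_pos hσ]
  calc 2 * |ε * σ - Real.sin (ε * σ)| / (σ ^ 2) ^ 2 / α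
      ≤ 2 * (2 * (|ε| * σ)) / (σ ^ 2) ^ 2 / δ := by gcongr
    _ = 4 * |ε| / δ * (1 / σ ^ 3) := by field_simp; ring

theorem laplace_transform_of_trace_general
    (ε c δ : ℝ) (hc : 0 < c) (hδ : 0 < δ)
    (lam : ℕ → ℝ) (hlam : ∀ n, 0 < lam n)
    (hgrow : ∀ n : ℕ, 1 ≤ n → c * (n:ℝ)^2 ≤ lam n)
    (α2 : ℕ → ℝ) (hα : ∀ n, δ ≤ α2 n)
    (u : ℝ → ℝ)
    (hu : ∀ t : ℝ, u t = ∑' n : ℕ,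
      2 * (ε * Real.sqrt (lam n) - Real.sin (ε * Real.sqrt (lam n))) / (lam n)^2 *
        (Real.sin (t * Real.sqrt (lam n)) / α2 n))
    (s : ℂ) (hs : 0 < s.re) :
    ∫ t in Set.Ioi (0:ℝ), Complex.exp (-s * t) * (u t : ℂ) =
      ∑' n : ℕ,
        ((ε * Real.sqrt (lam n) - Real.sin (ε * Real.sqrt (lam n))) / (lam n)^2 : ℂ) *
          (2 * (Real.sqrt (lam n) : ℂ) / ((s^2 + (lam n : ℂ)) * (α2 n : ℂ))) := by
  have hsq : ∀ n, √(lam n) ^ 2 = lam n := fun n => sq_sqrt (hlam n).le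
  set a : ℕ → ℝ := fun n => 2 * (ε * √(lam n) - Real.sin (ε * √(lam n))) / lam n ^ 2 / α2 n
  have hsqrt_grow : ∀ n : ℕ, 1 ≤ n → √c * n ≤ √(lam n) := fun n hn => by
    rw [← sqrt_sq n.cast_nonneg, ← sqrt_mul hc.le]
    exact sqrt_le_sqrt (hgrow n hn)
  have ha : Summable fun n => |a n| := by
    refine .of_nonneg_of_le (fun _ => abs_nonneg _) (fun n => ?_)
      ((summable_one_div_pow_of_mul_le (sqrt_pos.mpr hc) hsqrt_grow (by norm_num : 1 < 3)).mul_left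
        (4 * |ε| / δ))
    simpa only [hsq] using abs_two_mul_sub_sin_div_le (sqrt_pos.mpr (hlam n)) hδ (hα n)
  have hu' : ∀ t, u t = ∑' n, a n * Real.sin (t * √(lam n)) := fun t => by
    rw [hu t]
    exact tsum_congr fun n => by ring
  simp_rw [hu', integral_exp_neg_mul_tsum_sin hs ha, ← ofReal_pow, hsq]
  exact tsum_congr fun n => by simp only [a, div_eq_mul_inv, mul_inv]; push_cast; ring

theorem laplace_transform_of_trace
    (ε c δ : ℝ) (hε : 0 < ε) (hc : 0 < c) (hδ : 0 < δ)
    (lam : ℕ → ℝ) (hlam : ∀ n, 0 < lam n)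
    (hgrow : ∀ n : ℕ, 1 ≤ n → c * (n:ℝ)^2 ≤ lam n)
    (α2 : ℕ → ℝ) (hα : ∀ n, δ ≤ α2 n)
    (u : ℝ → ℝ)
    (hu : ∀ t : ℝ, u t = ∑' n : ℕ,
      2 * (ε * Real.sqrt (lam n) - Real.sin (ε * Real.sqrt (lam n))) / (lam n)^2 *
        (Real.sin (t * Real.sqrt (lam n)) / α2 n))
    (s : ℂ) (hs : 0 < s.re) :
    ∫ t in Set.Ioi (0:ℝ), Complex.exp (-s * t) * (u t : ℂ) =
      ∑' n : ℕ,
        ((ε * Real.sqrt (lam n) - Real.sin (ε * Real.sqrt (lam n))) / (lam n)^2 : ℂ) *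
          (2 * (Real.sqrt (lam n) : ℂ) / ((s^2 + (lam n : ℂ)) * (α2 n : ℂ))) :=
  laplace_transform_of_trace_general ε c δ hc hδ lam hlam hgrow α2 hα u hu s hs
end
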